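/- Let T be a tree rooted at r with a shadow-closed link set E, and let F ⊆ E be a shadows-minimal feasible cover of T. Let v ≠ r be a vertex such that the subtree T_v has exactly four leaves a, b, c, d, where a and b are the two children of a stem s ∈ T_v with twin link ab, the subtree T_v is both c-closed and d-closed, and cd ∉ E. If ab ∈ F, then Σ_{x ∈ T_v ∖ L} deg_F(x) ≥ 3. -/

import Mathlib

open scoped Classical

/-- The set of tree edges lying on a path (necessarily the unique one in a tree)
between `u` and `v`. -/
def pathEdges {V : Type*} (T : SimpleGraph V) (u v : V) : Set (Sym2 V) :=
  {e | ∃ p : T.Walk u v, p.IsPath ∧ e ∈ p.edges}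

/-- The set of vertices lying on a path between `u` and `v`. -/
def pathSupport {V : Type*} (T : SimpleGraph V) (u v : V) : Set V :=
  {w | ∃ p : T.Walk u v, p.IsPath ∧ w ∈ p.support}

/-- The link `l` covers the tree edge `e` : `e` lies on the tree path between the
endpoints of `l`. -/
def Covers {V : Type*} (T : SimpleGraph V) (l e : Sym2 V) : Prop :=
  ∃ u v, l = s(u, v) ∧ e ∈ pathEdges T u v

/-- A set `F` of links covers the tree `T` (is feasible): every edge of `T` is covered
by some link of `F`. -/
def CoversTree {V : Type*} (T : SimpleGraph V) (F : Set (Sym2 V)) : Prop :=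
  ∀ e ∈ T.edgeSet, ∃ l ∈ F, Covers T l e

/-- `x` belongs to the subtree `T_v` of `T` rooted at `r`:
`v` lies on the tree path from `x` to the root `r`. -/
def InSubtree {V : Type*} (T : SimpleGraph V) (r v x : V) : Prop :=
  v ∈ pathSupport T x r

/-- A leaf is a vertex with exactly one neighbour (degree one). -/
def IsLeaf {V : Type*} (T : SimpleGraph V) (v : V) : Prop :=
  ∃! w, T.Adj v w

/-- `y` is the parent of `x` in the tree `T` rooted at `r`. -/
def IsParent {V : Type*} (T : SimpleGraph V) (r x y : V) : Prop :=
  T.Adj x y ∧ InSubtree T r y x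

/-- `w` is the least common ancestor of `u` and `v` in the tree `T` rooted at `r`. -/
def IsLCA {V : Type*} (T : SimpleGraph V) (r u v w : V) : Prop :=
  w ∈ pathSupport T u v ∧ w ∈ pathSupport T u r ∧ w ∈ pathSupport T v r

/-- The link `cd` is a shadow of the link `ab`: the tree path between `c` and `d` is a
strict subpath of the tree path between `a` and `b`. -/
def IsShadow {V : Type*} (T : SimpleGraph V) (c d a b : V) : Prop :=
  c ≠ d ∧ pathEdges T c d ⊂ pathEdges T a b

/-- The link set `E` is shadow-closed: every shadow of a link of `E` belongs to `E`. -/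
def ShadowClosed {V : Type*} (T : SimpleGraph V) (E : Finset (Sym2 V)) : Prop :=
  ∀ a b c d, s(a, b) ∈ E → IsShadow T c d a b → s(c, d) ∈ E

/-- `F ⊆ E` is a shadows-minimal feasible solution: it is a minimum-cardinality cover of
`T` among subsets of `E`, and replacing any link of `F` by one of its shadows renders it
infeasible. -/
def ShadowsMinimal {V : Type*} (T : SimpleGraph V) (E F : Finset (Sym2 V)) : Prop :=
  F ⊆ E ∧ CoversTree T ↑F ∧
    (∀ F' : Finset (Sym2 V), F' ⊆ E → CoversTree T ↑F' → F.card ≤ F'.card) ∧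
    ∀ a b c d, s(a, b) ∈ F → IsShadow T c d a b →
      ¬ CoversTree T ↑(insert s(c, d) (F.erase s(a, b)))

/-- `deg_F(x)`: the number of links of `F` incident to `x`. -/
noncomputable def degF {V : Type*} (F : Finset (Sym2 V)) (x : V) : ℕ :=
  (F.filter (fun e => x ∈ e)).card

/-- `s` is a stem with twin link `ab`: an internal vertex whose children are exactly the
two leaves `a` and `b`, with `ab ∈ E`. -/
def IsStem {V : Type*} (T : SimpleGraph V) (r : V) (E : Finset (Sym2 V)) (s a b : V) : Prop :=
  a ≠ b ∧ ¬ IsLeaf T s ∧ IsLeaf T a ∧ IsLeaf T b ∧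
    IsParent T r a s ∧ IsParent T r b s ∧
    (∀ x, IsParent T r x s → x = a ∨ x = b) ∧ s(a, b) ∈ E

/-- The subtree `T_v` is `x`-closed: every link of `E` incident to `x` has both endpoints
in `T_v`. -/
def XClosed {V : Type*} (T : SimpleGraph V) (r : V) (E : Finset (Sym2 V)) (v x : V) : Prop :=
  ∀ l ∈ E, x ∈ l → ∀ y ∈ l, InSubtree T r v y

/-- The subtree `T_v` is leaf-closed: it is `x`-closed for every leaf `x ∈ L_v`. -/
def LeafClosed {V : Type*} (T : SimpleGraph V) (r : V) (E : Finset (Sym2 V)) (v : V) : Prop :=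
  ∀ x, IsLeaf T x → InSubtree T r v x → XClosed T r E v x

/-- The subtree `T_v` is minimally leaf-closed: it is leaf-closed and no subtree rooted
at a strict descendant of `v` is leaf-closed. -/
def MinLeafClosed {V : Type*} (T : SimpleGraph V) (r : V) (E : Finset (Sym2 V)) (v : V) : Prop :=
  LeafClosed T r E v ∧ ∀ u, InSubtree T r v u → u ≠ v → ¬ LeafClosed T r E u

/-- `ax` is an up-link of the leaf `a`: a link of `E` incident to `a` whose least common
ancestor with `a` is closest to the root among all links of `E` incident to `a`. -/
def IsUpLink {V : Type*} (T : SimpleGraph V) (r : V) (E : Finset (Sym2 V)) (a x : V) : Prop :=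
  s(a, x) ∈ E ∧ ∀ y w w', s(a, y) ∈ E → IsLCA T r a x w → IsLCA T r a y w' →
    T.dist w r ≤ T.dist w' r

/-- A matching: a set of links (pairs of distinct vertices) no two of which share an
endpoint. -/
def IsMatching {V : Type*} (M : Finset (Sym2 V)) : Prop :=
  (∀ l ∈ M, ¬ l.IsDiag) ∧ ∀ l ∈ M, ∀ l' ∈ M, l ≠ l' → ∀ x, x ∈ l → x ∉ l'

/-!
Shadow-minimality forces the twin link `ab` to be the only link of `F` at `a` or `b` leaving
`{a, b, s}`: any other link `ay` could be replaced by its shadow `sy`, since `ab` still covers the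
edge `as`. Hence the links of `F` covering the leaf edges at `c` and `d` end in internal vertices
of `T_v` (they stay in `T_v` by closedness, avoid `a, b` by the previous remark and avoid each
other since `cd ∉ E`), and so does the link covering the edge above `v`, whose endpoint inside
`T_v` cannot be a leaf. These three links are distinct and each is counted in the sum.
-/

open Finset SimpleGraph

section TreePaths

variable {V : Type*} {T : SimpleGraph V}

theorem pathEdges_comm (u w : V) : pathEdges T u w = pathEdges T w u := by
  ext e
  constructor <;> rintro ⟨p, hp, he⟩ <;>
    exact ⟨p.reverse, hp.reverse, by rwa [Walk.edges_reverse, List.mem_reverse]⟩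

theorem ne_of_mem_pathEdges {u w : V} {e : Sym2 V} (he : e ∈ pathEdges T u w) : u ≠ w := by
  rintro rfl
  obtain ⟨p, hp, he⟩ := he
  simp [Walk.edges_eq_nil.mpr (Walk.isPath_iff_nil.mp hp)] at he

theorem covers_mk_iff {u w : V} {e : Sym2 V} : Covers T s(u, w) e ↔ e ∈ pathEdges T u w := by
  refine ⟨?_, fun he => ⟨u, w, rfl, he⟩⟩
  rintro ⟨u', w', huw, he⟩
  rcases Sym2.eq_iff.mp huw with ⟨rfl, rfl⟩ | ⟨rfl, rfl⟩
  · exact he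
  · rwa [pathEdges_comm]

theorem SimpleGraph.IsTree.mem_edges_of_mem_pathEdges (hT : T.IsTree) {u w : V} {e : Sym2 V}
    (he : e ∈ pathEdges T u w) (p : T.Walk u w) : e ∈ p.edges := by
  obtain ⟨q, hq, heq⟩ := he
  have hbypass : p.bypass = q := (hT.existsUnique_path u w).unique p.bypass_isPath hq
  exact p.edges_bypass_subset_edges (hbypass ▸ heq)

theorem SimpleGraph.IsTree.pathEdges_eq_of_isPath (hT : T.IsTree) {u w : V} {p : T.Walk u w}
    (hp : p.IsPath) : pathEdges T u w = {e | e ∈ p.edges} :=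
  Set.ext fun _ => ⟨fun he => hT.mem_edges_of_mem_pathEdges he p, fun he => ⟨p, hp, he⟩⟩

theorem IsLeaf.eq_or_eq_of_mem_support {x u w : V} (hx : IsLeaf T x) {p : T.Walk u w}
    (hp : p.IsPath) (hxp : x ∈ p.support) : x = u ∨ x = w := by
  by_contra! hne
  obtain ⟨y, -, hy⟩ := hx
  have h₁ : ¬ (p.takeUntil x hxp).Nil := Walk.not_nil_of_ne hne.1.symm
  have h₂ : ¬ (p.dropUntil x hxp).Nil := Walk.not_nil_of_ne hne.2
  -- both halves of `p` at `x` use the only edge `xy` at the leaf `x`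
  have e₁ := (p.takeUntil x hxp).mk_penultimate_end_mem_edges h₁
  have e₂ := (p.dropUntil x hxp).mk_start_snd_mem_edges h₂
  rw [hy _ (Walk.adj_penultimate h₁).symm, Sym2.eq_swap] at e₁
  rw [hy _ (Walk.adj_snd h₂)] at e₂
  exact hp.isTrail.disjoint_edges_takeUntil_dropUntil hxp e₁ e₂

theorem IsLeaf.eq_or_eq_of_mem_pathEdges {x u w : V} (hx : IsLeaf T x) {e : Sym2 V}
    (he : e ∈ pathEdges T u w) (hxe : x ∈ e) : x = u ∨ x = w := by
  obtain ⟨p, hp, he⟩ := he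
  exact hx.eq_or_eq_of_mem_support hp (p.mem_support_of_mem_edges he hxe)

theorem IsLeaf.mk_notMem_pathEdges {x y u : V} (hx : IsLeaf T x) (hxy : T.Adj x y) (hux : u ≠ x) :
    s(x, y) ∉ pathEdges T y u := fun he => by
  rcases hx.eq_or_eq_of_mem_pathEdges he (Sym2.mem_mk_left x y) with h | h
  exacts [hxy.ne h, hux h.symm]

theorem IsLeaf.pathEdges_eq_insert (hT : T.IsTree) {x y u : V} (hx : IsLeaf T x)
    (hxy : T.Adj x y) (hux : u ≠ x) : pathEdges T x u = insert s(x, y) (pathEdges T y u) := by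
  obtain ⟨q, hq⟩ := (hT.existsUnique_path y u).exists
  have hxq : x ∉ q.support := fun hmem => by
    rcases hx.eq_or_eq_of_mem_support hq hmem with h | h
    exacts [hxy.ne h, hux h.symm]
  rw [hT.pathEdges_eq_of_isPath ((Walk.cons_isPath_iff hxy q).mpr ⟨hq, hxq⟩),
    hT.pathEdges_eq_of_isPath hq]
  ext e
  simp

theorem CoversTree.exists_mem_of_isLeaf {F : Set (Sym2 V)} (hcov : CoversTree T F) {x : V}
    (hx : IsLeaf T x) : ∃ z, z ≠ x ∧ s(x, z) ∈ F := by
  obtain ⟨y, hy, -⟩ := id hx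
  obtain ⟨l, hl, u, w, rfl, he⟩ := hcov s(x, y) hy
  rcases hx.eq_or_eq_of_mem_pathEdges he (Sym2.mem_mk_left x y) with rfl | rfl
  · exact ⟨w, (ne_of_mem_pathEdges he).symm, hl⟩
  · exact ⟨u, ne_of_mem_pathEdges he, Sym2.eq_swap ▸ hl⟩

end TreePaths

section Subtrees

variable {V : Type*} {T : SimpleGraph V} {r v pv : V}

theorem SimpleGraph.IsTree.exists_adj_mem_pathEdges (hT : T.IsTree) (hv : v ≠ r) :
    ∃ pv, T.Adj v pv ∧ s(v, pv) ∈ pathEdges T v r := by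
  obtain ⟨p, hp⟩ := (hT.existsUnique_path v r).exists
  have hnil : ¬ p.Nil := Walk.not_nil_of_ne hv
  exact ⟨p.snd, p.adj_snd hnil, p, hp, p.mk_start_snd_mem_edges hnil⟩

theorem inSubtree_of_mem_pathEdges {x : V} (he : s(v, pv) ∈ pathEdges T x r) :
    InSubtree T r v x := by
  obtain ⟨p, hp, he⟩ := he
  exact ⟨p, hp, p.fst_mem_support_of_mem_edges he⟩

theorem InSubtree.exists_walk_notMem_edges (hT : T.IsTree) (hvr : s(v, pv) ∈ pathEdges T v r)
    {x : V} (hx : InSubtree T r v x) : ∃ q : T.Walk x v, s(v, pv) ∉ q.edges := by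
  obtain ⟨p, hp, hvp⟩ := hx
  exact ⟨p.takeUntil v hvp, fun he => hp.isTrail.disjoint_edges_takeUntil_dropUntil hvp he
    (hT.mem_edges_of_mem_pathEdges hvr _)⟩

-- `hvr` says that `pv` is the parent of `v`.
theorem inSubtree_iff_not_inSubtree (hT : T.IsTree) (hvr : s(v, pv) ∈ pathEdges T v r)
    {u w : V} (he : s(v, pv) ∈ pathEdges T u w) : InSubtree T r v u ↔ ¬ InSubtree T r v w := by
  constructor
  · intro hu hw
    obtain ⟨p, hp⟩ := hu.exists_walk_notMem_edges hT hvr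
    obtain ⟨q, hq⟩ := hw.exists_walk_notMem_edges hT hvr
    have := hT.mem_edges_of_mem_pathEdges he (p.append q.reverse)
    simp_all [Walk.edges_append, Walk.edges_reverse]
  · intro hw
    by_contra hu
    obtain ⟨p, hp⟩ := (hT.existsUnique_path u r).exists
    obtain ⟨q, hq⟩ := (hT.existsUnique_path w r).exists
    have := hT.mem_edges_of_mem_pathEdges he (p.append q.reverse)
    rw [Walk.edges_append, Walk.edges_reverse, List.mem_append, List.mem_reverse] at this
    rcases this with h | h
    exacts [hu (inSubtree_of_mem_pathEdges ⟨p, hp, h⟩),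
      hw (inSubtree_of_mem_pathEdges ⟨q, hq, h⟩)]

theorem CoversTree.exists_mem_inSubtree_not_inSubtree (hT : T.IsTree) {F : Set (Sym2 V)}
    (hcov : CoversTree T F) (hv : v ≠ r) :
    ∃ w wo, s(w, wo) ∈ F ∧ InSubtree T r v w ∧ ¬ InSubtree T r v wo := by
  obtain ⟨pv, hadj, hvr⟩ := hT.exists_adj_mem_pathEdges hv
  obtain ⟨l, hl, u, w, rfl, he⟩ := hcov s(v, pv) hadj
  have hcross := inSubtree_iff_not_inSubtree hT hvr he
  by_cases hu : InSubtree T r v u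
  · exact ⟨u, w, hl, hu, hcross.mp hu⟩
  · exact ⟨w, u, Sym2.eq_swap ▸ hl, not_not.mp (mt hcross.mpr hu), hu⟩

theorem CoversTree.exists_mem_inSubtree_not_isLeaf_not_inSubtree (hT : T.IsTree)
    {F : Set (Sym2 V)} (hcov : CoversTree T F) (hv : v ≠ r)
    (hleaf : ∀ x y, IsLeaf T x → InSubtree T r v x → s(x, y) ∈ F → InSubtree T r v y) :
    ∃ w wo, s(w, wo) ∈ F ∧ InSubtree T r v w ∧ ¬ IsLeaf T w ∧ ¬ InSubtree T r v wo := by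
  obtain ⟨w, wo, hw, hwv, hwo⟩ := hcov.exists_mem_inSubtree_not_inSubtree hT hv
  exact ⟨w, wo, hw, hwv, fun hwL => hwo (hleaf w wo hwL hwv hw), hwo⟩

theorem XClosed.inSubtree_of_mem {E : Finset (Sym2 V)} {x y : V} (hx : XClosed T r E v x)
    (hxy : s(x, y) ∈ E) : InSubtree T r v y :=
  hx _ hxy (Sym2.mem_mk_left x y) y (Sym2.mem_mk_right x y)

theorem CoversTree.exists_mem_inSubtree_not_isLeaf {E F : Finset (Sym2 V)} (hFE : F ⊆ E)
    (hcov : CoversTree T ↑F) {x : V} (hx : IsLeaf T x) (hclosed : XClosed T r E v x)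
    (hleaf : ∀ y, IsLeaf T y → InSubtree T r v y → y ≠ x → s(x, y) ∉ F) :
    ∃ z, s(x, z) ∈ F ∧ InSubtree T r v z ∧ ¬ IsLeaf T z := by
  obtain ⟨z, hzx, hz⟩ := hcov.exists_mem_of_isLeaf hx
  have hzv := hclosed.inSubtree_of_mem (hFE hz)
  exact ⟨z, hz, hzv, fun hzL => hleaf z hzL hzv hzx hz⟩

end Subtrees

section ShadowsMinimal

variable {V : Type*} {T : SimpleGraph V}

theorem ShadowsMinimal.eq_or_eq_or_eq_of_isLeaf (hT : T.IsTree) {E F : Finset (Sym2 V)}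
    (hF : ShadowsMinimal T E F) {a b p y : V} (ha : IsLeaf T a) (hap : T.Adj a p) (hab : a ≠ b)
    (habF : s(a, b) ∈ F) (hayF : s(a, y) ∈ F) : y = a ∨ y = b ∨ y = p := by
  by_contra! hy
  obtain ⟨hya, hyb, hyp⟩ := hy
  have hpath := ha.pathEdges_eq_insert hT hap hya
  refine hF.2.2.2 a y p y hayF ⟨hyp.symm, hpath ▸ Set.ssubset_insert
    (ha.mk_notMem_pathEdges hap hya)⟩ fun e he => ?_
  obtain ⟨l, hlF, hle⟩ := hF.2.1 e he
  by_cases hl : l = s(a, y)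
  · subst hl
    rcases (hpath ▸ covers_mk_iff.mp hle : e ∈ insert s(a, p) (pathEdges T p y)) with rfl | he
    · refine ⟨s(a, b), ?_, covers_mk_iff.mpr ?_⟩
      · exact mem_insert_of_mem
          (mem_erase.mpr ⟨fun h => hyb (Sym2.congr_right.mp h).symm, habF⟩)
      · rw [ha.pathEdges_eq_insert hT hap hab.symm]
        exact Set.mem_insert _ _
    · exact ⟨s(p, y), mem_insert_self _ _, covers_mk_iff.mpr he⟩
  · exact ⟨l, mem_insert_of_mem (mem_erase.mpr ⟨hl, hlF⟩), hle⟩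

theorem ShadowsMinimal.eq_or_eq_or_eq_of_isStem (hT : T.IsTree) {r s a b : V}
    {E F : Finset (Sym2 V)} (hF : ShadowsMinimal T E F) (hstem : IsStem T r E s a b)
    (habF : s(a, b) ∈ F) {x y : V} (hx : x = a ∨ x = b) (hxy : s(x, y) ∈ F) :
    y = a ∨ y = b ∨ y = s := by
  obtain ⟨hab, -, ha, hb, ⟨has, -⟩, ⟨hbs, -⟩, -⟩ := hstem
  rcases hx with rfl | rfl
  · exact hF.eq_or_eq_or_eq_of_isLeaf hT ha has hab habF hxy
  · have := hF.eq_or_eq_or_eq_of_isLeaf hT hb hbs hab.symm (Sym2.eq_swap ▸ habF) hxy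
    tauto

theorem ShadowsMinimal.exists_mem_inSubtree_not_isLeaf (hT : T.IsTree) {r v s a b c d : V}
    {E F : Finset (Sym2 V)} (hF : ShadowsMinimal T E F) (hstem : IsStem T r E s a b)
    (habF : s(a, b) ∈ F) (hac : a ≠ c) (hbc : b ≠ c)
    (hleaves : ∀ x, (IsLeaf T x ∧ InSubtree T r v x) ↔ (x = a ∨ x = b ∨ x = c ∨ x = d))
    (hclosed : XClosed T r E v c) (hcdE : s(c, d) ∉ E) :
    ∃ z, s(c, z) ∈ F ∧ InSubtree T r v z ∧ ¬ IsLeaf T z := by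
  have hc : IsLeaf T c := ((hleaves c).mpr (by simp)).1
  refine hF.2.1.exists_mem_inSubtree_not_isLeaf hF.1 hc hclosed fun y hy hyv hyc hcy => ?_
  have hcab (hy : y = a ∨ y = b) : False := by
    rcases hF.eq_or_eq_or_eq_of_isStem hT hstem habF hy (Sym2.eq_swap ▸ hcy) with h | h | h
    exacts [hac h.symm, hbc h.symm, hstem.2.1 (h ▸ hc)]
  rcases (hleaves y).mp ⟨hy, hyv⟩ with h | h | h | h
  exacts [hcab (.inl h), hcab (.inr h), hyc h, hcdE (h ▸ hF.1 hcy)]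

end ShadowsMinimal

theorem card_le_sum_degF {V : Type*} [Fintype V] {P : V → Prop} [DecidablePred P]
    {S F : Finset (Sym2 V)} (hSF : S ⊆ F) (hS : ∀ l ∈ S, ∃ x ∈ l, P x) :
    #S ≤ ∑ x, if P x then degF F x else 0 := by
  have hpos : ∀ l ∈ S, 1 ≤ #((univ.filter P).bipartiteBelow (· ∈ ·) l) := fun l hl => by
    obtain ⟨x, hxl, hx⟩ := hS l hl
    exact card_pos.mpr ⟨x, by simp [hxl, hx]⟩
  calc #S ≤ ∑ l ∈ S, #((univ.filter P).bipartiteBelow (· ∈ ·) l) := by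
        simpa using card_nsmul_le_sum S _ 1 hpos
    _ = ∑ x ∈ univ.filter P, #(S.bipartiteAbove (· ∈ ·) x) :=
        (sum_card_bipartiteAbove_eq_sum_card_bipartiteBelow _).symm
    _ ≤ ∑ x ∈ univ.filter P, degF F x := sum_le_sum fun x _ => card_le_card fun l => by
        simpa [degF] using fun hl hxl => ⟨hSF hl, hxl⟩
    _ = ∑ x, if P x then degF F x else 0 := sum_filter _ _

theorem statement8_general {V : Type*} [Fintype V] (T : SimpleGraph V) (hT : T.IsTree) (r : V)
    (E F : Finset (Sym2 V))
    (hF : ShadowsMinimal T E F)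
    (v : V) (hv : v ≠ r) (a b c d s : V)
    (hac : a ≠ c) (had : a ≠ d) (hbc : b ≠ c) (hbd : b ≠ d) (hcd : c ≠ d)
    (hleaves : ∀ x, (IsLeaf T x ∧ InSubtree T r v x) ↔ (x = a ∨ x = b ∨ x = c ∨ x = d))
    (hstem : IsStem T r E s a b) (hsv : InSubtree T r v s)
    (hclosedc : XClosed T r E v c) (hclosedd : XClosed T r E v d)
    (hcdE : s(c, d) ∉ E) :
    s(a, b) ∈ F →
      3 ≤ ∑ x : V, (if InSubtree T r v x ∧ ¬ IsLeaf T x then degF F x else 0) := by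
  intro habF
  have hleaf_v x (hx : x = a ∨ x = b ∨ x = c ∨ x = d) : InSubtree T r v x :=
    ((hleaves x).mpr hx).2
  obtain ⟨z₁, hz₁, hz₁v, hz₁L⟩ :=
    hF.exists_mem_inSubtree_not_isLeaf hT hstem habF hac hbc hleaves hclosedc hcdE
  obtain ⟨z₂, hz₂, hz₂v, hz₂L⟩ :=
    hF.exists_mem_inSubtree_not_isLeaf hT hstem habF had hbd (c := d) (d := c)
      (fun x => by rw [hleaves x]; tauto) hclosedd (Sym2.eq_swap ▸ hcdE)
  have hstem_v y (hy : y = a ∨ y = b ∨ y = s) : InSubtree T r v y := by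
    rcases hy with h | h | h
    exacts [hleaf_v y (.inl h), hleaf_v y (.inr (.inl h)), h ▸ hsv]
  obtain ⟨w, wo, hw, hwv, hwL, hwo⟩ :=
    hF.2.1.exists_mem_inSubtree_not_isLeaf_not_inSubtree hT hv fun x y hx hxv hxy => by
      rcases (hleaves x).mp ⟨hx, hxv⟩ with h | h | h | h
      exacts [hstem_v y (hF.eq_or_eq_or_eq_of_isStem hT hstem habF (.inl h) hxy),
        hstem_v y (hF.eq_or_eq_or_eq_of_isStem hT hstem habF (.inr h) hxy),
        (h ▸ hclosedc).inSubtree_of_mem (hF.1 hxy), (h ▸ hclosedd).inSubtree_of_mem (hF.1 hxy)]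
  have hc : IsLeaf T c := ((hleaves c).mpr (by simp)).1
  have h₁₂ : s(c, z₁) ≠ s(d, z₂) := fun h => by
    rcases Sym2.eq_iff.mp h with ⟨h, -⟩ | ⟨rfl, -⟩
    exacts [hcd h, hz₂L hc]
  have h₁₃ : s(c, z₁) ≠ s(w, wo) := fun h => by
    rcases Sym2.eq_iff.mp h with ⟨-, rfl⟩ | ⟨rfl, -⟩
    exacts [hwo hz₁v, hwo (hleaf_v _ (by simp))]
  have h₂₃ : s(d, z₂) ≠ s(w, wo) := fun h => by
    rcases Sym2.eq_iff.mp h with ⟨-, rfl⟩ | ⟨rfl, -⟩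
    exacts [hwo hz₂v, hwo (hleaf_v _ (by simp))]
  calc 3 = #{s(c, z₁), s(d, z₂), s(w, wo)} :=
        (card_eq_three.mpr ⟨_, _, _, h₁₂, h₁₃, h₂₃, rfl⟩).symm
    _ ≤ _ := by
      refine card_le_sum_degF (by simp [insert_subset_iff, hz₁, hz₂, mem_coe.mp hw]) ?_
      simp only [mem_insert, mem_singleton, forall_eq_or_imp, forall_eq]
      exact ⟨⟨z₁, Sym2.mem_mk_right c z₁, hz₁v, hz₁L⟩, ⟨z₂, Sym2.mem_mk_right d z₂, hz₂v, hz₂L⟩,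
        ⟨w, Sym2.mem_mk_left w wo, hwv, hwL⟩⟩

/-- if `T_v` (`v ≠ r`) has exactly four leaves `a, b, c, d`, where `a, b`
are the children of a stem `s ∈ T_v` with twin link `ab`, `T_v` is `c`-closed and
`d`-closed, and `cd ∉ E`, then `ab ∈ F` implies `Σ_{x ∈ T_v ∖ L} deg_F(x) ≥ 3`. -/
theorem statement8 {V : Type*} [Fintype V] (T : SimpleGraph V) (hT : T.IsTree) (r : V)
    (hr : ¬ IsLeaf T r) (E F : Finset (Sym2 V))
    (hlinks : ∀ l ∈ E, ¬ l.IsDiag)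
    (hE : ShadowClosed T E)
    (hF : ShadowsMinimal T E F)
    (v : V) (hv : v ≠ r) (a b c d s : V)
    (hab : a ≠ b) (hac : a ≠ c) (had : a ≠ d) (hbc : b ≠ c) (hbd : b ≠ d) (hcd : c ≠ d)
    (hleaves : ∀ x, (IsLeaf T x ∧ InSubtree T r v x) ↔ (x = a ∨ x = b ∨ x = c ∨ x = d))
    (hstem : IsStem T r E s a b) (hsv : InSubtree T r v s)
    (hclosedc : XClosed T r E v c) (hclosedd : XClosed T r E v d)
    (hcdE : s(c, d) ∉ E) :
    s(a, b) ∈ F →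
      3 ≤ ∑ x : V, (if InSubtree T r v x ∧ ¬ IsLeaf T x then degF F x else 0) :=
  statement8_general T hT r E F hF v hv a b c d s hac had hbc hbd hcd hleaves hstem hsv hclosedc
    hclosedd hcdE
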